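/- arXiv:2307.01218 — 5 statements merged into one kernel-verified Lean document; each statement's English description precedes it below -/
import Mathlib

section
/- Let A be a real m×n matrix such that AᵀA is invertible, and let λ₁ ≤ λ₂ ≤ … ≤ λₙ be the eigenvalues of AᵀA in non-decreasing order. For each ℓ ∈ {1,…,m} let a_ℓ ∈ ℝⁿ denote the ℓ-th row of A and let τ_ℓ := a_ℓᵀ (AᵀA)⁻¹ a_ℓ be its leverage score. Fix k distinct indices ℓ₁,…,ℓ_k ∈ {1,…,m} and let A' be the (m−k)×n matrix obtained from A by deleting the rows a_{ℓ₁},…,a_{ℓ_k}, with λ'₁ ≤ … ≤ λ'ₙ the eigenvalues of (A')ᵀA'. Then for every i ∈ {1,…,n}, (1 − τ_{ℓ₁} − τ_{ℓ₂} − … − τ_{ℓ_k}) · λ_i ≤ λ'_i ≤ λ_i. -/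
/-! Deleting the rows indexed by `S` turns `AᵀA` into `AᵀA - ∑_{ℓ ∈ S} a_ℓ a_ℓᵀ`, so
`xᵀA'ᵀA'x ≤ xᵀAᵀAx`. Cauchy–Schwarz for the inner product `⟪u, v⟫ = uᵀAᵀAv` gives
`(a_ℓᵀx)² ≤ τ_ℓ · xᵀAᵀAx`, hence `(1 - ∑ τ_ℓ) · xᵀAᵀAx ≤ xᵀA'ᵀA'x`. Both quadratic-form
inequalities pass to each sorted eigenvalue by the Courant–Fischer dimension count (when
`1 - ∑ τ_ℓ < 0` the lower bound is trivial, the eigenvalues being nonnegative). -/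

open Matrix

/-- The eigenvalues of a real symmetric matrix, listed in non-decreasing order
(with multiplicity); junk value `0` if the matrix is not symmetric. -/
noncomputable def sortedEigenvalues {n : ℕ} (M : Matrix (Fin n) (Fin n) ℝ) : Fin n → ℝ :=
  if h : M.IsHermitian then h.eigenvalues ∘ Tuple.sort h.eigenvalues else 0

lemma Module.Basis.finrank_span_image {K V ι : Type*} [DivisionRing K] [AddCommGroup V] [Module K V]
    (b : Module.Basis ι K V) (s : Finset ι) :
    Module.finrank K (Submodule.span K (b '' s)) = s.card := by
  rw [Set.image_eq_range]
  exact (finrank_span_eq_card (b.linearIndependent.comp _ Subtype.val_injective)).trans (by simp)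

lemma Module.Basis.exists_ne_zero_mem_span_Ici_inf_span_Iic {K V : Type*} [DivisionRing K]
    [AddCommGroup V] [Module K V] {n : ℕ} (b b' : Module.Basis (Fin n) K V) (i : Fin n) :
    ∃ x ≠ 0, x ∈ Submodule.span K (b '' Set.Ici i) ⊓ Submodule.span K (b' '' Set.Iic i) := by
  have : FiniteDimensional K V := b.finiteDimensional_of_finite
  have hdisj :
      ¬ Disjoint (Submodule.span K (b '' Set.Ici i)) (Submodule.span K (b' '' Set.Iic i)) := by
    intro h
    have := Submodule.finrank_add_finrank_le_of_disjoint h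
    rw [← Finset.coe_Ici, ← Finset.coe_Iic, b.finrank_span_image, b'.finrank_span_image,
      Module.finrank_eq_card_basis b, Fin.card_Ici, Fin.card_Iic, Fintype.card_fin] at this
    omega
  rw [disjoint_iff] at hdisj
  exact Submodule.exists_mem_ne_zero_of_ne_bot hdisj |>.imp fun x ⟨hx, hx0⟩ => ⟨hx0, hx⟩

open RealInnerProductSpace

section QuadraticForm

variable {ι : Type*} [Fintype ι]

lemma EuclideanSpace.real_inner_eq_dotProduct (x y : EuclideanSpace ℝ ι) : ⟪x, y⟫ = x ⬝ᵥ y := by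
  simp [EuclideanSpace.inner_eq_star_dotProduct, dotProduct_comm]

lemma dotProduct_mulVec_eq_sum_mul_sq_inner {M : Matrix ι ι ℝ} (hM : M.IsHermitian)
    (b : OrthonormalBasis ι ℝ (EuclideanSpace ℝ ι)) {μ : ι → ℝ}
    (hb : ∀ j, M *ᵥ b j = μ j • b j) (x : EuclideanSpace ℝ ι) :
    x ⬝ᵥ M *ᵥ x = ∑ j, μ j * ⟪b j, x⟫ ^ 2 := by
  have hMb (j : ι) : ⟪b j, WithLp.toLp 2 (M *ᵥ x)⟫ = μ j * ⟪b j, x⟫ := by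
    rw [EuclideanSpace.real_inner_eq_dotProduct, EuclideanSpace.real_inner_eq_dotProduct,
      WithLp.ofLp_toLp, dotProduct_mulVec,
      ← mulVec_transpose, ← conjTranspose_eq_transpose_of_trivial, hM.eq, hb, smul_dotProduct,
      smul_eq_mul]
  calc x ⬝ᵥ M *ᵥ x = ⟪x, WithLp.toLp 2 (M *ᵥ x)⟫ := by
        rw [EuclideanSpace.real_inner_eq_dotProduct, WithLp.ofLp_toLp]
    _ = ∑ j, ⟪x, b j⟫ * ⟪b j, WithLp.toLp 2 (M *ᵥ x)⟫ := (b.sum_inner_mul_inner _ _).symm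
    _ = ∑ j, μ j * ⟪b j, x⟫ ^ 2 := by
      simp only [hMb, real_inner_comm x]
      exact Finset.sum_congr rfl fun j _ => by ring

lemma inner_eq_zero_of_mem_span_image (b : OrthonormalBasis ι ℝ (EuclideanSpace ℝ ι))
    {s : Set ι} {x : EuclideanSpace ℝ ι} (hx : x ∈ Submodule.span ℝ (b '' s)) {j : ι}
    (hj : j ∉ s) : ⟪b j, x⟫ = 0 := by
  rw [← b.coe_toBasis, Module.Basis.mem_span_image] at hx
  simpa [b.coe_toBasis_repr_apply, b.repr_apply_apply] using mt (@hx j) hj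

lemma dotProduct_mulVec_le_of_mem_span_image {M : Matrix ι ι ℝ} (hM : M.IsHermitian)
    (b : OrthonormalBasis ι ℝ (EuclideanSpace ℝ ι)) {μ : ι → ℝ}
    (hb : ∀ j, M *ᵥ b j = μ j • b j) {s : Set ι} {C : ℝ} (hC : ∀ j ∈ s, μ j ≤ C)
    {x : EuclideanSpace ℝ ι} (hx : x ∈ Submodule.span ℝ (b '' s)) :
    x ⬝ᵥ M *ᵥ x ≤ C * ‖x‖ ^ 2 := by
  rw [dotProduct_mulVec_eq_sum_mul_sq_inner hM b hb, ← b.sum_sq_inner_right, Finset.mul_sum]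
  refine Finset.sum_le_sum fun j _ => ?_
  by_cases hj : j ∈ s
  · exact mul_le_mul_of_nonneg_right (hC j hj) (sq_nonneg _)
  · simp [inner_eq_zero_of_mem_span_image b hx hj]

lemma le_dotProduct_mulVec_of_mem_span_image {M : Matrix ι ι ℝ} (hM : M.IsHermitian)
    (b : OrthonormalBasis ι ℝ (EuclideanSpace ℝ ι)) {μ : ι → ℝ}
    (hb : ∀ j, M *ᵥ b j = μ j • b j) {s : Set ι} {C : ℝ} (hC : ∀ j ∈ s, C ≤ μ j)
    {x : EuclideanSpace ℝ ι} (hx : x ∈ Submodule.span ℝ (b '' s)) :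
    C * ‖x‖ ^ 2 ≤ x ⬝ᵥ M *ᵥ x := by
  rw [dotProduct_mulVec_eq_sum_mul_sq_inner hM b hb, ← b.sum_sq_inner_right, Finset.mul_sum]
  refine Finset.sum_le_sum fun j _ => ?_
  by_cases hj : j ∈ s
  · exact mul_le_mul_of_nonneg_right (hC j hj) (sq_nonneg _)
  · simp [inner_eq_zero_of_mem_span_image b hx hj]

end QuadraticForm

namespace Matrix.IsHermitian

variable {n : ℕ} {M : Matrix (Fin n) (Fin n) ℝ}

lemma sortedEigenvalues_eq (hM : M.IsHermitian) :
    sortedEigenvalues M = hM.eigenvalues ∘ Tuple.sort hM.eigenvalues :=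
  dif_pos hM

lemma monotone_sortedEigenvalues (hM : M.IsHermitian) : Monotone (sortedEigenvalues M) := by
  rw [hM.sortedEigenvalues_eq]
  exact Tuple.monotone_sort _

noncomputable def sortedEigenvectorBasis (hM : M.IsHermitian) :
    OrthonormalBasis (Fin n) ℝ (EuclideanSpace ℝ (Fin n)) :=
  hM.eigenvectorBasis.reindex (Tuple.sort hM.eigenvalues).symm

lemma mulVec_sortedEigenvectorBasis (hM : M.IsHermitian) (j : Fin n) :
    M *ᵥ hM.sortedEigenvectorBasis j = sortedEigenvalues M j • hM.sortedEigenvectorBasis j := by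
  rw [sortedEigenvectorBasis, OrthonormalBasis.reindex_apply, Equiv.symm_symm,
    hM.sortedEigenvalues_eq]
  exact hM.mulVec_eigenvectorBasis _

end Matrix.IsHermitian

theorem mul_sortedEigenvalues_le_sortedEigenvalues {n : ℕ} {M N : Matrix (Fin n) (Fin n) ℝ}
    (hM : M.IsHermitian) (hN : N.IsHermitian) {c : ℝ} (hc : 0 ≤ c)
    (h : ∀ x, c * (x ⬝ᵥ M *ᵥ x) ≤ x ⬝ᵥ N *ᵥ x) (i : Fin n) :
    c * sortedEigenvalues M i ≤ sortedEigenvalues N i := by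
  -- Courant–Fischer: the span of the top `n - i` eigenvectors of `M` meets that of the bottom
  -- `i + 1` eigenvectors of `N`
  obtain ⟨x, hx0, hx⟩ := hM.sortedEigenvectorBasis.toBasis.exists_ne_zero_mem_span_Ici_inf_span_Iic
    hN.sortedEigenvectorBasis.toBasis i
  rw [OrthonormalBasis.coe_toBasis, OrthonormalBasis.coe_toBasis, Submodule.mem_inf] at hx
  have hM_ge := le_dotProduct_mulVec_of_mem_span_image hM _ hM.mulVec_sortedEigenvectorBasis
    (fun j hj => hM.monotone_sortedEigenvalues hj) hx.1
  have hN_le := dotProduct_mulVec_le_of_mem_span_image hN _ hN.mulVec_sortedEigenvectorBasis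
    (fun j hj => hN.monotone_sortedEigenvalues hj) hx.2
  have hx_pos : 0 < ‖x‖ ^ 2 := by positivity
  refine le_of_mul_le_mul_right ?_ hx_pos
  calc c * sortedEigenvalues M i * ‖x‖ ^ 2 = c * (sortedEigenvalues M i * ‖x‖ ^ 2) := mul_assoc ..
    _ ≤ c * (x ⬝ᵥ M *ᵥ x) := mul_le_mul_of_nonneg_left hM_ge hc
    _ ≤ x ⬝ᵥ N *ᵥ x := h x
    _ ≤ sortedEigenvalues N i * ‖x‖ ^ 2 := hN_le

lemma sortedEigenvalues_transpose_mul_self_nonneg {p : Type*} [Fintype p] {n : ℕ}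
    (B : Matrix p (Fin n) ℝ) (i : Fin n) : 0 ≤ sortedEigenvalues (Bᵀ * B) i := by
  have hB : (Bᵀ * B).IsHermitian := isHermitian_conjTranspose_mul_self B
  rw [hB.sortedEigenvalues_eq]
  exact eigenvalues_conjTranspose_mul_self_nonneg B _

section LeverageScore

variable {p ι : Type*} [Fintype p] [Fintype ι]

lemma dotProduct_transpose_mul_self_mulVec (B : Matrix p ι ℝ) (x y : ι → ℝ) :
    x ⬝ᵥ (Bᵀ * B) *ᵥ y = B *ᵥ x ⬝ᵥ B *ᵥ y := by
  rw [← mulVec_mulVec, dotProduct_mulVec, vecMul_transpose]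

lemma dotProduct_transpose_mul_self_mulVec_self (B : Matrix p ι ℝ) (x : ι → ℝ) :
    x ⬝ᵥ (Bᵀ * B) *ᵥ x = ∑ ℓ, (B ℓ ⬝ᵥ x) ^ 2 := by
  rw [dotProduct_transpose_mul_self_mulVec]
  simp only [dotProduct, sq, mulVec]

lemma sq_dotProduct_le_of_isUnit_transpose_mul_self [DecidableEq ι] (B : Matrix p ι ℝ)
    (hB : IsUnit (Bᵀ * B)) (a x : ι → ℝ) :
    (a ⬝ᵥ x) ^ 2 ≤ (a ⬝ᵥ (Bᵀ * B)⁻¹ *ᵥ a) * (x ⬝ᵥ (Bᵀ * B) *ᵥ x) := by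
  set y := (Bᵀ * B)⁻¹ *ᵥ a
  have ha : a = (Bᵀ * B) *ᵥ y := by
    rw [mulVec_mulVec, mul_nonsing_inv _ ((isUnit_iff_isUnit_det _).mp hB), one_mulVec]
  have hax : a ⬝ᵥ x = B *ᵥ y ⬝ᵥ B *ᵥ x := by
    rw [ha, dotProduct_comm, dotProduct_transpose_mul_self_mulVec, dotProduct_comm]
  have hay : a ⬝ᵥ y = B *ᵥ y ⬝ᵥ B *ᵥ y := by
    rw [ha, dotProduct_comm, dotProduct_transpose_mul_self_mulVec]
  rw [hax, hay, dotProduct_transpose_mul_self_mulVec]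
  simpa only [dotProduct, sq] using Finset.sum_mul_sq_le_sq_mul_sq Finset.univ (B *ᵥ y) (B *ᵥ x)

noncomputable def leverageScore [DecidableEq ι] (A : Matrix p ι ℝ) (ℓ : p) : ℝ :=
  A ℓ ⬝ᵥ (Aᵀ * A)⁻¹ *ᵥ A ℓ

lemma one_sub_sum_leverageScore_mul_le [DecidableEq ι] [DecidableEq p] (A : Matrix p ι ℝ)
    (hA : IsUnit (Aᵀ * A)) (S : Finset p) (x : ι → ℝ) :
    (1 - ∑ ℓ ∈ S, leverageScore A ℓ) * (x ⬝ᵥ (Aᵀ * A) *ᵥ x) ≤ ∑ ℓ ∈ Sᶜ, (A ℓ ⬝ᵥ x) ^ 2 := by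
  have hS : ∑ ℓ ∈ S, (A ℓ ⬝ᵥ x) ^ 2 ≤ (∑ ℓ ∈ S, leverageScore A ℓ) * (x ⬝ᵥ (Aᵀ * A) *ᵥ x) := by
    rw [Finset.sum_mul]
    exact Finset.sum_le_sum fun ℓ _ => sq_dotProduct_le_of_isUnit_transpose_mul_self A hA (A ℓ) x
  have hsplit := Finset.sum_add_sum_compl S fun ℓ => (A ℓ ⬝ᵥ x) ^ 2
  rw [← dotProduct_transpose_mul_self_mulVec_self] at hsplit
  linarith

end LeverageScore

theorem leverage_score_eigenvalue_perturbation_general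
    {m n : ℕ} (A : Matrix (Fin m) (Fin n) ℝ)
    (hinv : IsUnit (Aᵀ * A))
    (τ : Fin m → ℝ)
    (hτ : ∀ ℓ : Fin m, τ ℓ = A ℓ ⬝ᵥ ((Aᵀ * A)⁻¹ *ᵥ A ℓ))
    (S : Finset (Fin m))
    (A' : Matrix {i : Fin m // i ∉ S} (Fin n) ℝ)
    (hA' : ∀ (i : {i : Fin m // i ∉ S}) (j : Fin n), A' i j = A i.1 j)
    (i : Fin n) :
    (1 - ∑ ℓ ∈ S, τ ℓ) * sortedEigenvalues (Aᵀ * A) i ≤ sortedEigenvalues (A'ᵀ * A') i ∧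
      sortedEigenvalues (A'ᵀ * A') i ≤ sortedEigenvalues (Aᵀ * A) i := by
  have hG : (Aᵀ * A).IsHermitian := isHermitian_conjTranspose_mul_self A
  have hG' : (A'ᵀ * A').IsHermitian := isHermitian_conjTranspose_mul_self A'
  have hquad (x : Fin n → ℝ) : x ⬝ᵥ (A'ᵀ * A') *ᵥ x = ∑ ℓ ∈ Sᶜ, (A ℓ ⬝ᵥ x) ^ 2 := by
    rw [dotProduct_transpose_mul_self_mulVec_self]
    simp only [fun ℓ => funext (hA' ℓ)]
    exact (Finset.sum_subtype Sᶜ (fun _ => Finset.mem_compl) fun ℓ => (A ℓ ⬝ᵥ x) ^ 2).symm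
  constructor
  · rcases le_or_gt 0 (1 - ∑ ℓ ∈ S, τ ℓ) with hc | hc
    · refine mul_sortedEigenvalues_le_sortedEigenvalues hG hG' hc (fun x => ?_) i
      simpa only [hquad, hτ, leverageScore] using one_sub_sum_leverageScore_mul_le A hinv S x
    · exact (mul_nonpos_of_nonpos_of_nonneg hc.le
        (sortedEigenvalues_transpose_mul_self_nonneg A i)).trans
          (sortedEigenvalues_transpose_mul_self_nonneg A' i)
  · simpa only [one_mul] using mul_sortedEigenvalues_le_sortedEigenvalues hG' hG zero_le_one
      (fun x => by
        rw [one_mul, hquad, dotProduct_transpose_mul_self_mulVec_self]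
        exact Finset.sum_le_univ_sum_of_nonneg fun ℓ => sq_nonneg _) i

/-- **Eigenvalue perturbation via leverage scores.**
Let `A` be a real `m × n` matrix with `AᵀA` invertible and sorted eigenvalues
`λ₁ ≤ … ≤ λₙ` of `AᵀA`.  For each row `ℓ` let `τ ℓ = aℓᵀ (AᵀA)⁻¹ aℓ` be its leverage score.
If `A'` is obtained from `A` by deleting the `k` distinct rows indexed by a set `S` of size `k`,
with sorted eigenvalues `λ'₁ ≤ … ≤ λ'ₙ` of `(A')ᵀA'`, then for every `i`,
`(1 - Σ_{ℓ ∈ S} τ ℓ) · λᵢ ≤ λ'ᵢ ≤ λᵢ`. -/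
theorem leverage_score_eigenvalue_perturbation
    {m n k : ℕ} (A : Matrix (Fin m) (Fin n) ℝ)
    (hinv : IsUnit (Aᵀ * A))
    (τ : Fin m → ℝ)
    (hτ : ∀ ℓ : Fin m, τ ℓ = A ℓ ⬝ᵥ ((Aᵀ * A)⁻¹ *ᵥ A ℓ))
    (S : Finset (Fin m)) (hS : S.card = k)
    (A' : Matrix {i : Fin m // i ∉ S} (Fin n) ℝ)
    (hA' : ∀ (i : {i : Fin m // i ∉ S}) (j : Fin n), A' i j = A i.1 j)
    (i : Fin n) :
    (1 - ∑ ℓ ∈ S, τ ℓ) * sortedEigenvalues (Aᵀ * A) i ≤ sortedEigenvalues (A'ᵀ * A') i ∧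
      sortedEigenvalues (A'ᵀ * A') i ≤ sortedEigenvalues (Aᵀ * A) i :=
  leverage_score_eigenvalue_perturbation_general A hinv τ hτ S A' hA' i
end

section
/- Let n ≥ 35, let G' be a finite simple graph on the vertex set {1,…,n−1}, and let G be the graph on {1,…,n} obtained from G' by adding the new vertex n together with the single edge {n−1, n}. Then the second-smallest Laplacian eigenvalue of G satisfies λ₂(L_G) ≥ min{ 0.04, 0.3 · λ₂(L_{G'}) }. In particular, if G' is connected with λ₂(L_{G'}) ≥ c > 0, then G is connected with λ₂(L_G) ≥ min{0.04, 0.3c} > 0. -/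
open Matrix

open Classical in
/-- The (real) Laplacian matrix of a graph on `Fin n`. -/
noncomputable def lap {n : ℕ} (G : SimpleGraph (Fin n)) : Matrix (Fin n) (Fin n) ℝ :=
  G.lapMatrix ℝ

/-!
Take a unit vector `v ⊥ 𝟏` whose `L_G`-energy is at most `λ₂(L_G)`; one exists in the span of
the first two eigenvectors. Its energy is the `L_{G'}`-energy of its restriction `ψ` to `G'` plus
`(v_{n-1} - v_n)²`. Since `∑ ψ = -v_n` and `‖ψ‖² = 1 - v_n²`, the Poincaré inequality
`λ₂(L_{G'}) (‖ψ‖² - (∑ ψ)² / (n - 1)) ≤ ψᵀ L_{G'} ψ` bounds the first term below by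
`0.3 λ₂(L_{G'})` as long as `v_n² ≤ 0.68`, because then `v_n² / (n - 1) ≤ 0.02`. Otherwise
`v_{n-1}² ≤ ‖ψ‖² < 0.32 < v_n²` and the pendant edge alone carries energy
`(v_{n-1} - v_n)² > 0.04`.
-/

open Finset

lemma exists_sq_add_sq_eq_one_mul_add_mul_eq_zero (a b : ℝ) :
    ∃ α β : ℝ, α ^ 2 + β ^ 2 = 1 ∧ α * a + β * b = 0 := by
  by_cases h : a ^ 2 + b ^ 2 = 0
  · exact ⟨0, 1, by norm_num, by nlinarith [sq_nonneg a, sq_nonneg b]⟩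
  · have hr := Real.sq_sqrt (add_nonneg (sq_nonneg a) (sq_nonneg b))
    have hr₀ : √(a ^ 2 + b ^ 2) ≠ 0 := by positivity
    refine ⟨b / √(a ^ 2 + b ^ 2), -a / √(a ^ 2 + b ^ 2), ?_, ?_⟩
    · field_simp
      linarith
    · field_simp
      ring

namespace Matrix.IsHermitian

variable {N : ℕ} {M : Matrix (Fin N) (Fin N) ℝ} (hM : M.IsHermitian)

lemma sortedEigenvalues_eq_s2 (k : Fin N) :
    sortedEigenvalues M k = hM.eigenvalues (Tuple.sort hM.eigenvalues k) := by
  rw [sortedEigenvalues, dif_pos hM]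
  rfl

lemma sortedEigenvalues_one_le_eigenvalues (hN : 1 < N) {j : Fin N}
    (hj : j ≠ Tuple.sort hM.eigenvalues ⟨0, by omega⟩) :
    sortedEigenvalues M ⟨1, hN⟩ ≤ hM.eigenvalues j := by
  obtain ⟨k, rfl⟩ := (Tuple.sort hM.eigenvalues).surjective j
  have hk : (k : ℕ) ≠ 0 := fun h => hj (congrArg _ (Fin.ext h))
  rw [sortedEigenvalues_eq_s2 hM]
  exact Tuple.monotone_sort hM.eigenvalues (Fin.le_def.mpr (by simp only; omega))

lemma dotProduct_eigenvectorBasis (i j : Fin N) :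
    ⇑(hM.eigenvectorBasis i) ⬝ᵥ ⇑(hM.eigenvectorBasis j) = if i = j then 1 else 0 := by
  rw [← orthonormal_iff_ite.mp hM.eigenvectorBasis.orthonormal i j,
    EuclideanSpace.inner_eq_star_dotProduct, dotProduct_comm]
  rfl

lemma dotProduct_eq_sum (x y : Fin N → ℝ) :
    x ⬝ᵥ y = ∑ k, (⇑(hM.eigenvectorBasis k) ⬝ᵥ x) * (⇑(hM.eigenvectorBasis k) ⬝ᵥ y) := by
  have := hM.eigenvectorBasis.sum_inner_mul_inner (WithLp.toLp 2 x) (WithLp.toLp 2 y)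
  simp only [EuclideanSpace.inner_eq_star_dotProduct, star_trivial] at this
  rw [dotProduct_comm, ← this]
  simp only [dotProduct_comm y]

lemma eigenvectorBasis_dotProduct_mulVec (k : Fin N) (x : Fin N → ℝ) :
    ⇑(hM.eigenvectorBasis k) ⬝ᵥ (M *ᵥ x) =
      hM.eigenvalues k * (⇑(hM.eigenvectorBasis k) ⬝ᵥ x) := by
  rw [dotProduct_mulVec, ← mulVec_transpose, (isHermitian_iff_isSymm.mp hM).eq,
    mulVec_eigenvectorBasis, smul_dotProduct, smul_eq_mul]

lemma dotProduct_mulVec_eq_sum (x : Fin N → ℝ) :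
    x ⬝ᵥ (M *ᵥ x) = ∑ k, hM.eigenvalues k * (⇑(hM.eigenvectorBasis k) ⬝ᵥ x) ^ 2 := by
  rw [hM.dotProduct_eq_sum]
  refine sum_congr rfl fun k _ => ?_
  rw [eigenvectorBasis_dotProduct_mulVec]
  ring

end Matrix.IsHermitian

theorem Matrix.IsHermitian.exists_dotProduct_mulVec_le_sortedEigenvalues_one {N : ℕ}
    {M : Matrix (Fin N) (Fin N) ℝ} (hM : M.IsHermitian) (hN : 1 < N) (w : Fin N → ℝ) :
    ∃ v, w ⬝ᵥ v = 0 ∧ v ⬝ᵥ v = 1 ∧ v ⬝ᵥ (M *ᵥ v) ≤ sortedEigenvalues M ⟨1, hN⟩ := by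
  set i₀ := Tuple.sort hM.eigenvalues ⟨0, by omega⟩
  set i₁ := Tuple.sort hM.eigenvalues ⟨1, hN⟩
  have hi : i₀ ≠ i₁ := (Tuple.sort hM.eigenvalues).injective.ne (by simp [Fin.ext_iff])
  have hle : hM.eigenvalues i₀ ≤ hM.eigenvalues i₁ :=
    Tuple.monotone_sort hM.eigenvalues (by simp [Fin.le_def])
  set u₀ := ⇑(hM.eigenvectorBasis i₀)
  set u₁ := ⇑(hM.eigenvectorBasis i₁)
  obtain ⟨α, β, hαβ, hw⟩ := exists_sq_add_sq_eq_one_mul_add_mul_eq_zero (w ⬝ᵥ u₀) (w ⬝ᵥ u₁)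
  refine ⟨α • u₀ + β • u₁, ?_, ?_, ?_⟩
  · simpa [dotProduct_add, dotProduct_smul] using hw
  · simp [u₀, u₁, dotProduct_add, add_dotProduct, dotProduct_smul, smul_dotProduct,
      dotProduct_eigenvectorBasis, hi, hi.symm]
    linear_combination hαβ
  · rw [sortedEigenvalues_eq_s2 hM]
    change _ ≤ hM.eigenvalues i₁
    simp [u₀, u₁, mulVec_add, mulVec_smul, mulVec_eigenvectorBasis, dotProduct_add,
      add_dotProduct, dotProduct_smul, smul_dotProduct, dotProduct_eigenvectorBasis, hi, hi.symm]
    linear_combination mul_le_mul_of_nonneg_left hle (sq_nonneg α) + hM.eigenvalues i₁ * hαβ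

namespace Matrix.PosSemidef

variable {N : ℕ} {M : Matrix (Fin N) (Fin N) ℝ}

lemma sortedEigenvalues_nonneg (hM : M.PosSemidef) (k : Fin N) : 0 ≤ sortedEigenvalues M k := by
  rw [hM.isHermitian.sortedEigenvalues_eq_s2]
  exact hM.eigenvalues_nonneg _

theorem sortedEigenvalues_one_mul_le (hM : M.PosSemidef) (hN : 1 < N) {w φ : Fin N → ℝ}
    (hw : M *ᵥ w = 0) (hw₀ : w ≠ 0) (hφ : w ⬝ᵥ φ = 0) :
    sortedEigenvalues M ⟨1, hN⟩ * (φ ⬝ᵥ φ) ≤ φ ⬝ᵥ (M *ᵥ φ) := by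
  rcases le_or_gt (sortedEigenvalues M ⟨1, hN⟩) 0 with hle | hpos
  · have hφφ : 0 ≤ φ ⬝ᵥ φ := by simpa using dotProduct_self_star_nonneg φ
    have hQ : 0 ≤ φ ⬝ᵥ (M *ᵥ φ) := by simpa using hM.dotProduct_mulVec_nonneg φ
    nlinarith
  have hH := hM.isHermitian
  set u := fun k => ⇑(hH.eigenvectorBasis k)
  set i₀ := Tuple.sort hH.eigenvalues ⟨0, by omega⟩
  -- every eigenvalue but the smallest is positive, so `w` lies on the bottom eigenvector
  have hwk : ∀ k ≠ i₀, u k ⬝ᵥ w = 0 := fun k hk => by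
    have hk₀ := hH.eigenvectorBasis_dotProduct_mulVec k w
    rw [hw, dotProduct_zero] at hk₀
    have hk₁ := hH.sortedEigenvalues_one_le_eigenvalues hN hk
    exact (mul_eq_zero.mp hk₀.symm).resolve_left (by linarith)
  have hdot (y : Fin N → ℝ) : w ⬝ᵥ y = (u i₀ ⬝ᵥ w) * (u i₀ ⬝ᵥ y) := by
    rw [hH.dotProduct_eq_sum, sum_eq_single i₀ (fun k _ hk => by rw [hwk k hk, zero_mul]) (by simp)]
  have hw₀' : u i₀ ⬝ᵥ w ≠ 0 := fun h =>
    hw₀ (dotProduct_self_eq_zero.mp (by rw [hdot, h, zero_mul]))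
  have hφ₀ : u i₀ ⬝ᵥ φ = 0 := (mul_eq_zero.mp ((hdot φ).symm.trans hφ)).resolve_left hw₀'
  rw [hH.dotProduct_mulVec_eq_sum, hH.dotProduct_eq_sum φ φ, mul_sum]
  refine sum_le_sum fun k _ => ?_
  rcases eq_or_ne k i₀ with rfl | hk
  · simp [u, hφ₀]
  · rw [← sq]
    exact mul_le_mul_of_nonneg_right (hH.sortedEigenvalues_one_le_eigenvalues hN hk) (sq_nonneg _)

end Matrix.PosSemidef

namespace SimpleGraph

variable {N : ℕ} (G : SimpleGraph (Fin N))

lemma lap_eq_lapMatrix [DecidableRel G.Adj] : lap G = G.lapMatrix ℝ := by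
  unfold lap; congr!

lemma posSemidef_lap : (lap G).PosSemidef := by
  classical
  rw [lap_eq_lapMatrix]
  exact posSemidef_lapMatrix ℝ G

lemma lap_mulVec_one : lap G *ᵥ (fun _ => 1) = 0 := by
  classical
  rw [lap_eq_lapMatrix]
  exact lapMatrix_mulVec_const_eq_zero G

lemma dotProduct_lap_mulVec [DecidableRel G.Adj] (x : Fin N → ℝ) :
    x ⬝ᵥ (lap G *ᵥ x) = (∑ i, ∑ j, if G.Adj i j then (x i - x j) ^ 2 else 0) / 2 := by
  rw [lap_eq_lapMatrix, ← toLinearMap₂'_apply', lapMatrix_toLinearMap₂']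

theorem sortedEigenvalues_lap_one_mul_le (hN : 1 < N) (x : Fin N → ℝ) :
    sortedEigenvalues (lap G) ⟨1, hN⟩ * (x ⬝ᵥ x - (∑ i, x i) ^ 2 / N) ≤ x ⬝ᵥ (lap G *ᵥ x) := by
  classical
  have hN₀ : (N : ℝ) ≠ 0 := by positivity
  set φ := x - fun _ => (∑ i, x i) / N
  have hφ : (fun _ => 1) ⬝ᵥ φ = 0 := by
    simp [φ, dotProduct, sum_sub_distrib, mul_div_cancel₀ _ hN₀]
  have hφφ : φ ⬝ᵥ φ = x ⬝ᵥ x - (∑ i, x i) ^ 2 / N := by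
    simp [φ, dotProduct, sub_mul, mul_sub, sum_sub_distrib, ← sum_mul, ← mul_sum]
    field_simp
    ring
  have hQ : φ ⬝ᵥ (lap G *ᵥ φ) = x ⬝ᵥ (lap G *ᵥ x) := by
    simp only [dotProduct_lap_mulVec, φ, Pi.sub_apply, sub_sub_sub_cancel_right]
  rw [← hφφ, ← hQ]
  exact (posSemidef_lap G).sortedEigenvalues_one_mul_le hN (lap_mulVec_one G)
    (fun h => one_ne_zero (congrFun h ⟨0, by omega⟩)) hφ

end SimpleGraph

lemma min_le_of_pendant_bounds {m t x q μ μ' : ℝ} (hm : 34 ≤ m) (hμ' : 0 ≤ μ') (hq : 0 ≤ q)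
    (hx : x ^ 2 ≤ 1 - t ^ 2) (hq' : μ' * (1 - t ^ 2 - t ^ 2 / m) ≤ q)
    (hμ : q + (x - t) ^ 2 ≤ μ) :
    min 0.04 (0.3 * μ') ≤ μ := by
  rcases le_or_gt (t ^ 2) 0.68 with ht | ht
  · have : t ^ 2 / m ≤ 0.02 := by
      rw [div_le_iff₀ (by linarith)]
      nlinarith
    exact min_le_of_right_le (by nlinarith [sq_nonneg (x - t)])
  · -- `|x| ≤ √0.32` and `|t| > √0.68`, and `(√0.68 - √0.32)² > 0.04`
    exact min_le_of_left_le (by nlinarith [sq_nonneg (10 * x - 7 * t), sq_nonneg (10 * x + 7 * t)])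

structure SimpleGraph.IsPendantExtension {m : ℕ} (G' : SimpleGraph (Fin m)) (p : Fin m)
    (G : SimpleGraph (Fin (m + 1))) : Prop where
  adj_castSucc_castSucc : ∀ i j, G.Adj i.castSucc j.castSucc ↔ G'.Adj i j
  adj_last : ∀ b, G.Adj (Fin.last m) b ↔ b = p.castSucc

namespace SimpleGraph.IsPendantExtension

variable {m : ℕ} {G' : SimpleGraph (Fin m)} {p : Fin m} {G : SimpleGraph (Fin (m + 1))}

theorem connected (h : IsPendantExtension G' p G) (hG' : G'.Connected) : G.Connected := by
  have hreach : ∀ c, G.Reachable c p.castSucc := by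
    refine Fin.lastCases ((h.adj_last _).mpr rfl).reachable fun i => ?_
    exact (hG'.preconnected i p).map ⟨Fin.castSucc, (h.adj_castSucc_castSucc _ _).mpr⟩
  exact (connected_iff _).mpr ⟨fun a b => (hreach a).trans (hreach b).symm, ⟨p.castSucc⟩⟩

theorem dotProduct_lap_mulVec (h : IsPendantExtension G' p G) (v : Fin (m + 1) → ℝ) :
    v ⬝ᵥ (lap G *ᵥ v) = (fun i => v i.castSucc) ⬝ᵥ (lap G' *ᵥ fun i => v i.castSucc) +
      (v p.castSucc - v (Fin.last m)) ^ 2 := by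
  classical
  have hlast (i : Fin m) : G.Adj i.castSucc (Fin.last m) ↔ i = p := by
    rw [G.adj_comm, h.adj_last, Fin.castSucc_inj]
  simp only [SimpleGraph.dotProduct_lap_mulVec, Fin.sum_univ_castSucc, h.adj_castSucc_castSucc,
    hlast, h.adj_last, Fin.castSucc_inj, sum_add_distrib, sum_ite_eq', mem_univ, if_true,
    (Fin.castSucc_lt_last p).ne', if_false, add_zero]
  ring

theorem min_le_sortedEigenvalues_lap (h : IsPendantExtension G' p G) (hm : 34 ≤ m) :
    min 0.04 (0.3 * sortedEigenvalues (lap G') ⟨1, by omega⟩) ≤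
      sortedEigenvalues (lap G) ⟨1, by omega⟩ := by
  obtain ⟨v, hv₁, hvv, hvQ⟩ :=
    (posSemidef_lap G).isHermitian.exists_dotProduct_mulVec_le_sortedEigenvalues_one (by omega) 1
  set ψ : Fin m → ℝ := fun i => v i.castSucc
  set t := v (Fin.last m)
  have hsum : ∑ i, ψ i = -t := by
    simp only [dotProduct, Fin.sum_univ_castSucc, Pi.one_apply, one_mul] at hv₁
    linarith
  have hnorm : ψ ⬝ᵥ ψ = 1 - t ^ 2 := by
    simp only [dotProduct, Fin.sum_univ_castSucc] at hvv
    rw [dotProduct, sq]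
    linarith
  have hp : ψ p ^ 2 ≤ ψ ⬝ᵥ ψ := by
    simpa only [sq, dotProduct] using
      single_le_sum (f := fun i => ψ i * ψ i) (fun i _ => mul_self_nonneg _) (mem_univ p)
  have hpoincare := G'.sortedEigenvalues_lap_one_mul_le (by omega) ψ
  rw [hnorm, hsum, neg_sq] at hpoincare
  rw [h.dotProduct_lap_mulVec] at hvQ
  exact min_le_of_pendant_bounds (by exact_mod_cast hm)
    ((posSemidef_lap G').sortedEigenvalues_nonneg _)
    ((posSemidef_lap G').dotProduct_mulVec_nonneg ψ) (hnorm ▸ hp) hpoincare hvQ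

end SimpleGraph.IsPendantExtension

lemma SimpleGraph.isPendantExtension_of_adj_iff {m : ℕ} {G' : SimpleGraph (Fin m)}
    {G : SimpleGraph (Fin (m + 1))} (hm : 1 ≤ m)
    (hAdj : ∀ a b : Fin (m + 1), G.Adj a b ↔
      ((∃ (ha : a.1 < m) (hb : b.1 < m), G'.Adj ⟨a.1, ha⟩ ⟨b.1, hb⟩) ∨
        (a.1 = m - 1 ∧ b.1 = m) ∨ (a.1 = m ∧ b.1 = m - 1))) :
    G'.IsPendantExtension ⟨m - 1, by omega⟩ G where
  adj_castSucc_castSucc i j := by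
    simp only [hAdj, Fin.val_castSucc, Fin.is_lt, exists_true_left, Fin.eta, or_iff_left_iff_imp]
    have := i.is_lt
    omega
  adj_last b := by
    simp [hAdj, Fin.ext_iff]
    omega

/-- **Adding a pendant vertex keeps the spectral gap.**
Let `n ≥ 35`, let `G'` be a graph on the vertices `{1, …, n-1}` (modelled as `Fin (n-1)`,
vertex `i` corresponding to index `i - 1`), and let `G` on `{1, …, n}` (modelled as `Fin n`)
be obtained from `G'` by adding the new vertex `n` together with the single edge `{n-1, n}`.
Then `λ₂(L_G) ≥ min(0.04, 0.3 · λ₂(L_{G'}))`.  In particular, if `G'` is connected then so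
is `G`. -/
theorem lambda2_pendant_vertex
    (n : ℕ) (hn : 35 ≤ n)
    (G' : SimpleGraph (Fin (n - 1))) (G : SimpleGraph (Fin n))
    (hAdj : ∀ a b : Fin n, G.Adj a b ↔
      ((∃ (ha : a.1 < n - 1) (hb : b.1 < n - 1), G'.Adj ⟨a.1, ha⟩ ⟨b.1, hb⟩) ∨
        (a.1 = n - 2 ∧ b.1 = n - 1) ∨ (a.1 = n - 1 ∧ b.1 = n - 2))) :
    min 0.04 (0.3 * sortedEigenvalues (lap G') ⟨1, by omega⟩) ≤
        sortedEigenvalues (lap G) ⟨1, by omega⟩ ∧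
      (G'.Connected → G.Connected) := by
  obtain ⟨m, rfl⟩ : ∃ m, n = m + 1 := ⟨n - 1, by omega⟩
  have h : G'.IsPendantExtension ⟨m - 1, by omega⟩ G :=
    SimpleGraph.isPendantExtension_of_adj_iff (by omega) hAdj
  exact ⟨h.min_le_sortedEigenvalues_lap (by omega), h.connected⟩
end

section
/- (Foster's theorem.) Let G = (V,E) be a connected finite simple graph on n ≥ 2 vertices. Then the sum of the effective resistances over all edges equals n − 1: Σ_{{u,v} ∈ E} R_G(u,v) = n − 1. -/
open Classical in
/-- The Dirichlet energy `Σ_{{u,v} ∈ E} (φ u - φ v)²` of a potential `φ`,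
written as half the sum over ordered pairs. -/
noncomputable def energy {V : Type*} [Fintype V] (G : SimpleGraph V) (φ : V → ℝ) : ℝ :=
  (1/2) * ∑ u : V, ∑ v : V, if G.Adj u v then (φ u - φ v)^2 else 0

/-- The `s`-`t` effective resistance: the reciprocal of the minimal Dirichlet energy among
potentials with `φ s = 1` and `φ t = 0`. -/
noncomputable def effRes {V : Type*} [Fintype V] (G : SimpleGraph V) (s t : V) : ℝ :=
  1 / sInf (energy G '' {φ : V → ℝ | φ s = 1 ∧ φ t = 0})

/-!
Write `L` for the Laplacian and `b = eₛ - eₜ`. If `L x = b`, then every admissible potential `φ`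
has `φᵀ L x = φ s - φ t = 1`, so Cauchy–Schwarz for the form `L` gives `1 ≤ E(φ) · xᵀ L x`, with
equality for `φ = (x - x t) / (x s - x t)`; hence `R(s, t) = xᵀ L x = x s - x t`. For connected `G`
the matrix `H = (L + J/n)⁻¹` satisfies `L H = I - J/n`, so `x = H b` solves `L x = b` and
`R(u, v) = H u u - H u v - H v u + H v v`. Summed over the edges this is `tr (L H) = n - 1`.
-/

open Matrix Finset

namespace SimpleGraph

variable {V : Type*} [Fintype V] [DecidableEq V] (G : SimpleGraph V) [DecidableRel G.Adj]

theorem energy_eq_dotProduct_lapMatrix_mulVec (φ : V → ℝ) :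
    energy G φ = φ ⬝ᵥ (G.lapMatrix ℝ *ᵥ φ) := by
  rw [← toLinearMap₂'_apply', lapMatrix_toLinearMap₂', energy, one_div_mul_eq_div]
  congr!

omit [DecidableEq V] in
theorem energy_mul_sub_const (φ : V → ℝ) (a c : ℝ) :
    energy G (fun v => a * (φ v - c)) = a ^ 2 * energy G φ := by
  rw [energy, energy, mul_left_comm (a ^ 2)]
  congr 1
  rw [mul_sum]
  refine sum_congr rfl fun u _ => ?_
  rw [mul_sum]
  refine sum_congr rfl fun v _ => ?_
  split_ifs <;> ring

theorem effRes_eq_of_lapMatrix_mulVec_eq {s t : V} (hst : s ≠ t) {x : V → ℝ}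
    (hx : G.lapMatrix ℝ *ᵥ x = Pi.single s 1 - Pi.single t 1) :
    effRes G s t = x s - x t := by
  set B := (G.lapMatrix ℝ).toBilin'
  have hB_symm : B.IsSymm := isSymm_toBilin'_iff_isSymm.mpr (G.isSymm_lapMatrix ℝ)
  have hB_energy (φ : V → ℝ) : B φ φ = energy G φ := by
    rw [toBilin'_apply', energy_eq_dotProduct_lapMatrix_mulVec]
  have hB_nonneg (φ : V → ℝ) : 0 ≤ B φ φ := by
    rw [toBilin'_apply']
    exact (G.posSemidef_lapMatrix ℝ).dotProduct_mulVec_nonneg φ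
  have hBx (φ : V → ℝ) : B φ x = φ s - φ t := by
    rw [toBilin'_apply', hx, dotProduct_sub, dotProduct_single_one, dotProduct_single_one]
  set R := x s - x t
  have hBxx : B x x = R := hBx x
  have h_one_le {φ : V → ℝ} (hφ : φ s = 1 ∧ φ t = 0) : 1 ≤ energy G φ * R := by
    have := B.apply_sq_le_of_symm hB_nonneg (LinearMap.BilinForm.isSymm_iff.mp hB_symm) φ x
    rwa [hBx, hφ.1, hφ.2, hBxx, hB_energy, sub_zero, one_pow] at this
  have hR : 0 < R := by
    have h := h_one_le (φ := Pi.single s 1) (by simp [hst.symm])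
    exact pos_of_mul_pos_right (one_pos.trans_le h) (hB_energy _ ▸ hB_nonneg _)
  have h_least : IsLeast (energy G '' {φ | φ s = 1 ∧ φ t = 0}) R⁻¹ := by
    refine ⟨⟨fun v => R⁻¹ * (x v - x t), ⟨inv_mul_cancel₀ hR.ne', by simp⟩, ?_⟩, ?_⟩
    · rw [energy_mul_sub_const, ← hB_energy, hBxx]
      field_simp
    · rintro _ ⟨φ, hφ, rfl⟩
      rw [inv_le_iff_one_le_mul₀ hR]
      exact h_one_le hφ
  rw [effRes, h_least.csInf_eq, one_div, inv_inv]

theorem trace_lapMatrix_mul (H : Matrix V V ℝ) :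
    trace (G.lapMatrix ℝ * H) = ∑ u, ∑ v, if G.Adj u v then H u u - H v u else 0 := by
  refine sum_congr rfl fun u _ => ?_
  have hcol : (G.lapMatrix ℝ * H) u u = (G.lapMatrix ℝ *ᵥ fun v => H v u) u := rfl
  rw [diag_apply, hcol, lapMatrix_mulVec_apply, ← card_neighborFinset_eq_degree, ← sum_filter,
    ← neighborFinset_eq_filter, sum_sub_distrib, sum_const, nsmul_eq_mul]

theorem sum_adj_eq_two_mul_trace_lapMatrix_mul (H : Matrix V V ℝ) :
    ∑ u, ∑ v, (if G.Adj u v then H u u - H u v - H v u + H v v else 0) =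
      2 * trace (G.lapMatrix ℝ * H) := by
  have hswap : ∑ u, ∑ v, (if G.Adj u v then H v v - H u v else 0) =
      ∑ u, ∑ v, (if G.Adj u v then H u u - H v u else 0) := by
    rw [sum_comm]
    simp_rw [G.adj_comm]
  rw [trace_lapMatrix_mul, two_mul]
  nth_rw 2 [← hswap]
  rw [← sum_add_distrib]
  refine sum_congr rfl fun u _ => ?_
  rw [← sum_add_distrib]
  refine sum_congr rfl fun v _ => ?_
  split_ifs <;> ring

theorem of_one_mul_lapMatrix : (of 1 : Matrix V V ℝ) * G.lapMatrix ℝ = 0 := by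
  ext i j
  simpa [mul_apply, mulVec, dotProduct, (G.isSymm_lapMatrix ℝ).apply j]
    using congrFun (G.lapMatrix_mulVec_const_eq_zero (R := ℝ)) j

omit [DecidableEq V] in
theorem dotProduct_of_one_mulVec (x : V → ℝ) : x ⬝ᵥ (of 1 *ᵥ x) = (∑ i, x i) ^ 2 := by
  simp [mulVec, dotProduct, sq, sum_mul]

theorem posDef_lapMatrix_add_smul_of_one (hG : G.Connected) :
    (G.lapMatrix ℝ + (Fintype.card V : ℝ)⁻¹ • of 1).PosDef := by
  have : Nonempty V := hG.nonempty
  refine .of_dotProduct_mulVec_pos ?_ fun x hx => ?_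
  · rw [IsHermitian, conjTranspose_eq_transpose_of_trivial, transpose_add, transpose_smul,
      (G.isSymm_lapMatrix ℝ).eq]
    congr
  rw [star_trivial, add_mulVec, dotProduct_add, smul_mulVec, dotProduct_smul,
    dotProduct_of_one_mulVec, smul_eq_mul]
  have hL := (G.posSemidef_lapMatrix ℝ).dotProduct_mulVec_nonneg x
  rw [star_trivial] at hL
  by_contra! hle
  have hJ : 0 ≤ (Fintype.card V : ℝ)⁻¹ * (∑ i, x i) ^ 2 := by positivity
  have hLx : x ⬝ᵥ (G.lapMatrix ℝ *ᵥ x) = 0 := by linarith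
  have hsum : ∑ i, x i = 0 := by
    have : (Fintype.card V : ℝ)⁻¹ * (∑ i, x i) ^ 2 = 0 := by linarith
    simpa using this
  have hconst (i j : V) : x i = x j :=
    (lapMatrix_toLinearMap₂'_apply'_eq_zero_iff_forall_reachable G x).mp
      (by rwa [toLinearMap₂'_apply']) i j (hG.preconnected i j)
  refine hx (funext fun i => ?_)
  rw [sum_congr rfl fun j _ => hconst j i, sum_const, card_univ, nsmul_eq_mul] at hsum
  simpa using hsum

/-- Adding `J/n` (`J = of 1` the all-ones matrix) makes the Laplacian of a connected graph
invertible without changing its action on vectors of zero sum. -/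
noncomputable def greenMatrix : Matrix V V ℝ :=
  (G.lapMatrix ℝ + (Fintype.card V : ℝ)⁻¹ • of 1)⁻¹

theorem lapMatrix_mul_greenMatrix (hG : G.Connected) :
    G.lapMatrix ℝ * G.greenMatrix = 1 - (Fintype.card V : ℝ)⁻¹ • of 1 := by
  have : Nonempty V := hG.nonempty
  set M := G.lapMatrix ℝ + (Fintype.card V : ℝ)⁻¹ • of 1
  have hM : M * G.greenMatrix = 1 :=
    mul_nonsing_inv M (isUnit_iff_isUnit_det M |>.mp (G.posDef_lapMatrix_add_smul_of_one hG).isUnit)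
  have hJM : of 1 * M = of 1 := by
    have hJJ : (of 1 : Matrix V V ℝ) * of 1 = (Fintype.card V : ℝ) • of 1 := by
      ext i j; simp [mul_apply]
    rw [mul_add, of_one_mul_lapMatrix, Matrix.mul_smul, hJJ, smul_smul, zero_add,
      inv_mul_cancel₀ (by positivity), one_smul]
  have hJ : of 1 * G.greenMatrix = of 1 := by
    rw [← hJM, Matrix.mul_assoc, hM, Matrix.mul_one, hJM]
  calc G.lapMatrix ℝ * G.greenMatrix = (M - (Fintype.card V : ℝ)⁻¹ • of 1) * G.greenMatrix := by
        rw [add_sub_cancel_right]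
    _ = 1 - (Fintype.card V : ℝ)⁻¹ • of 1 := by rw [Matrix.sub_mul, hM, smul_mul, hJ]

theorem lapMatrix_mulVec_greenMatrix_mulVec_single_sub_single (hG : G.Connected) (s t : V) :
    G.lapMatrix ℝ *ᵥ (G.greenMatrix *ᵥ (Pi.single s 1 - Pi.single t 1)) =
      Pi.single s 1 - Pi.single t 1 := by
  have hJ : (of 1 : Matrix V V ℝ) *ᵥ (Pi.single s 1 - Pi.single t 1) = 0 := by
    ext i; simp [mulVec, dotProduct]
  rw [mulVec_mulVec, lapMatrix_mul_greenMatrix G hG, sub_mulVec, one_mulVec, smul_mulVec, hJ,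
    smul_zero, sub_zero]

theorem effRes_eq_greenMatrix (hG : G.Connected) {s t : V} (hst : s ≠ t) :
    effRes G s t =
      G.greenMatrix s s - G.greenMatrix s t - G.greenMatrix t s + G.greenMatrix t t := by
  rw [effRes_eq_of_lapMatrix_mulVec_eq G hst
    (lapMatrix_mulVec_greenMatrix_mulVec_single_sub_single G hG s t)]
  simp only [mulVec_sub, mulVec_single_one, Pi.sub_apply, col_apply]
  ring

theorem trace_lapMatrix_mul_greenMatrix (hG : G.Connected) :
    trace (G.lapMatrix ℝ * G.greenMatrix) = Fintype.card V - 1 := by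
  have : Nonempty V := hG.nonempty
  have hJ : trace (of 1 : Matrix V V ℝ) = Fintype.card V := by simp [trace]
  rw [lapMatrix_mul_greenMatrix G hG, trace_sub, trace_one, trace_smul, hJ, smul_eq_mul,
    inv_mul_cancel₀ (by positivity)]

end SimpleGraph

open Classical in
theorem foster_sum_edge_effRes_general
    (n : ℕ) (G : SimpleGraph (Fin n)) (hG : G.Connected) :
    (1/2) * ∑ u : Fin n, ∑ v : Fin n, (if G.Adj u v then effRes G u v else 0) =
      (n : ℝ) - 1 := by
  set H := G.greenMatrix
  have h_edge (u v : Fin n) : (if G.Adj u v then effRes G u v else 0) =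
      if G.Adj u v then H u u - H u v - H v u + H v v else 0 := by
    split_ifs with h
    · exact G.effRes_eq_greenMatrix hG h.ne
    · rfl
  simp_rw [h_edge]
  rw [G.sum_adj_eq_two_mul_trace_lapMatrix_mul, G.trace_lapMatrix_mul_greenMatrix hG,
    Fintype.card_fin]
  ring

open Classical in
/-- **Foster's theorem.**  For a connected graph `G` on `n ≥ 2` vertices, the sum of the
effective resistances over all edges (written as half the sum over ordered adjacent pairs)
equals `n - 1`. -/
theorem foster_sum_edge_effRes
    (n : ℕ) (hn : 2 ≤ n) (G : SimpleGraph (Fin n)) (hG : G.Connected) :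
    (1/2) * ∑ u : Fin n, ∑ v : Fin n, (if G.Adj u v then effRes G u v else 0) =
      (n : ℝ) - 1 :=
  foster_sum_edge_effRes_general n G hG
end

section
/- Let G = (V,E) be a connected finite simple graph and let e = {s,t} ∈ E be a bridge of G. Let H be the connected component of G − e containing s, regarded as a graph in its own right. Then for every pair of distinct vertices u, v belonging to H, the effective resistance is unchanged: R_G(u,v) = R_H(u,v). -/
/-! Restricting a potential to the component `S` of `s` in `G - st` can only lower its energy.
Conversely, a potential on `S` extends to `G` with the same energy by giving every vertex outside
`S` the value at `s`: the only edge of `G` leaving `S` is `st`, and its contribution vanishes.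
Hence both minimal energies coincide. -/

open Classical in
lemma energy_induce {V : Type*} [Fintype V] (G : SimpleGraph V) (S : Set V) [Fintype S]
    (φ : V → ℝ) :
    energy (G.induce S) (fun x => φ x) =
      (1/2) * ∑ x ∈ S.toFinset, ∑ y ∈ S.toFinset, if G.Adj x y then (φ x - φ y)^2 else 0 := by
  unfold energy
  rw [← Finset.sum_set_coe S]
  congr 2 with x
  rw [← Finset.sum_set_coe S]
  rfl

open Classical in
lemma energy_induce_le {V : Type*} [Fintype V] (G : SimpleGraph V) (S : Set V) [Fintype S]
    (φ : V → ℝ) :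
    energy (G.induce S) (fun x => φ x) ≤ energy G φ := by
  set f : V → V → ℝ := fun x y => if G.Adj x y then (φ x - φ y)^2 else 0
  have hf (x y : V) : 0 ≤ f x y := by positivity
  rw [energy_induce, energy]
  refine mul_le_mul_of_nonneg_left ?_ (by norm_num)
  calc ∑ x ∈ S.toFinset, ∑ y ∈ S.toFinset, f x y
      ≤ ∑ x ∈ S.toFinset, ∑ y, f x y :=
        Finset.sum_le_sum fun x _ =>
          Finset.sum_le_sum_of_subset_of_nonneg (Finset.subset_univ _) fun y _ _ => hf x y
    _ ≤ ∑ x, ∑ y, f x y :=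
        Finset.sum_le_sum_of_subset_of_nonneg (Finset.subset_univ _) fun x _ _ =>
          Finset.sum_nonneg fun y _ => hf x y

open Classical in
lemma energy_eq_energy_induce {V : Type*} [Fintype V] (G : SimpleGraph V) (S : Set V)
    [Fintype S] (φ : V → ℝ) (hφ : ∀ x y, G.Adj x y → y ∉ S → φ x = φ y) :
    energy G φ = energy (G.induce S) (fun x => φ x) := by
  set f : V → V → ℝ := fun x y => if G.Adj x y then (φ x - φ y)^2 else 0
  have hf (x y : V) (hxy : x ∉ S ∨ y ∉ S) : f x y = 0 := by
    by_cases hadj : G.Adj x y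
    · rcases hxy with hx | hy
      · simp [f, hadj, hφ y x hadj.symm hx]
      · simp [f, hadj, hφ x y hadj hy]
    · simp [f, hadj]
  rw [energy_induce, energy]
  congr 1
  symm
  calc ∑ x ∈ S.toFinset, ∑ y ∈ S.toFinset, f x y
      = ∑ x ∈ S.toFinset, ∑ y, f x y :=
        Finset.sum_congr rfl fun x _ => Finset.sum_subset (Finset.subset_univ _)
          fun y _ hy => hf x y (.inr (by simpa using hy))
    _ = ∑ x, ∑ y, f x y :=
        Finset.sum_subset (Finset.subset_univ _) fun x _ hx =>
          Finset.sum_eq_zero fun y _ => hf x y (.inl (by simpa using hx))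

theorem effRes_induce_of_cut_vertex {V : Type*} [Fintype V] (G : SimpleGraph V) (S : Set V)
    [Fintype S] (c : V) (hc : c ∈ S) (hcut : ∀ x y, G.Adj x y → x ∈ S → y ∉ S → x = c)
    (u v : S) :
    effRes (G.induce S) u v = effRes G u v := by
  classical
  unfold effRes
  congr 1
  apply csInf_eq_csInf_of_forall_exists_le
  · rintro _ ⟨ψ, ⟨hψu, hψv⟩, rfl⟩
    set φ : V → ℝ := fun x => if hx : x ∈ S then ψ ⟨x, hx⟩ else ψ ⟨c, hc⟩
    have hrestrict : (fun x : S => φ x) = ψ := funext fun x => dif_pos x.2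
    refine ⟨energy G φ, ⟨φ, ?_, rfl⟩, le_of_eq ?_⟩
    · simpa [← hrestrict] using And.intro hψu hψv
    · rw [energy_eq_energy_induce G S φ ?_, hrestrict]
      intro x y hxy hy
      by_cases hx : x ∈ S
      · obtain rfl := hcut x y hxy hx hy
        simp [φ, hx, hy]
      · simp [φ, hx, hy]
  · rintro _ ⟨φ, hφ, rfl⟩
    exact ⟨_, ⟨fun x : S => φ x, hφ, rfl⟩, energy_induce_le G S φ⟩

namespace SimpleGraph

variable {V : Type*} (G : SimpleGraph V) {s t : V}

lemma induce_deleteEdges_of_notMem {S : Set V} (ht : t ∉ S) :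
    (G.deleteEdges {s(s, t)}).induce S = G.induce S := by
  ext ⟨x, hx⟩ ⟨y, hy⟩
  simp only [comap_adj, Function.Embedding.subtype_apply, deleteEdges_adj, Set.mem_singleton_iff,
    Sym2.eq_iff, and_iff_left_iff_imp]
  rintro - (⟨-, rfl⟩ | ⟨rfl, -⟩) <;> contradiction

lemma eq_of_adj_of_reachable_deleteEdges (hbridge : ¬ (G.deleteEdges {s(s, t)}).Reachable s t)
    {x y : V} (hxy : G.Adj x y) (hx : (G.deleteEdges {s(s, t)}).Reachable s x)
    (hy : ¬ (G.deleteEdges {s(s, t)}).Reachable s y) : x = s := by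
  have hxy' : ¬ (G.deleteEdges {s(s, t)}).Adj x y := fun h => hy (hx.trans h.reachable)
  simp only [deleteEdges_adj, Set.mem_singleton_iff, Sym2.eq_iff, hxy, true_and, not_not] at hxy'
  rcases hxy' with ⟨rfl, -⟩ | ⟨rfl, -⟩
  · rfl
  · exact absurd hx hbridge

end SimpleGraph

open Classical in
theorem effRes_component_of_bridge_general
    {V : Type*} [Fintype V] (G : SimpleGraph V)
    (s t : V)
    (hbridge : ¬ (G.deleteEdges {s(s, t)}).Reachable s t)
    (u v : V)
    (hu : (G.deleteEdges {s(s, t)}).Reachable s u)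
    (hv : (G.deleteEdges {s(s, t)}).Reachable s v) :
    effRes G u v =
      effRes ((G.deleteEdges {s(s, t)}).induce
          {w : V | (G.deleteEdges {s(s, t)}).Reachable s w})
        ⟨u, hu⟩ ⟨v, hv⟩ := by
  rw [G.induce_deleteEdges_of_notMem hbridge]
  exact (effRes_induce_of_cut_vertex G {w | (G.deleteEdges {s(s, t)}).Reachable s w} s
    (SimpleGraph.Reachable.refl s)
    (fun x y hxy hx hy => G.eq_of_adj_of_reachable_deleteEdges hbridge hxy hx hy)
    ⟨u, hu⟩ ⟨v, hv⟩).symm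

open Classical in
/-- **Effective resistances inside one side of a bridge are unchanged.**
Let `G` be connected, and let `{s,t}` be a bridge of `G`, i.e. `s` and `t` are not reachable
from one another after the edge `{s,t}` is deleted.  Let `H` be the connected component of
`G - e` containing `s`, regarded as a graph in its own right (the induced subgraph of
`G - e` on the vertex set `{w | s ⟶ w in G - e}`).  Then for all distinct vertices `u, v`
of `H`, `R_G(u,v) = R_H(u,v)`. -/
theorem effRes_component_of_bridge
    {V : Type*} [Fintype V] (G : SimpleGraph V) (hG : G.Connected)
    (s t : V) (hst : G.Adj s t)
    (hbridge : ¬ (G.deleteEdges {s(s, t)}).Reachable s t)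
    (u v : V)
    (hu : (G.deleteEdges {s(s, t)}).Reachable s u)
    (hv : (G.deleteEdges {s(s, t)}).Reachable s v)
    (huv : u ≠ v) :
    effRes G u v =
      effRes ((G.deleteEdges {s(s, t)}).induce
          {w : V | (G.deleteEdges {s(s, t)}).Reachable s w})
        ⟨u, hu⟩ ⟨v, hv⟩ :=
  effRes_component_of_bridge_general G s t hbridge u v hu hv
end

section
/- (Series–parallel decomposition.) Let H₁ and H₂ be finite simple graphs on disjoint vertex sets, with s, u two distinct vertices in the same connected component of H₁, and v, t two distinct vertices in the same connected component of H₂. Let G be the graph on V(H₁) ∪ V(H₂) whose edge set is E(H₁) ∪ E(H₂) ∪ {{s,t}, {u,v}}. Then, writing R₁ = R_{H₁}(s,u) and R₂ = R_{H₂}(v,t), the s–t effective resistance in G is R_G(s,t) = (1 + R₁ + R₂)/(2 + R₁ + R₂); equivalently 1/R_G(s,t) = 1 + 1/(R₁ + 1 + R₂). In particular R_G(s,t) < 1. -/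
/-!
A potential `φ` on `G` with `φ s = 1`, `φ t = 0` has energy
`E_{H₁}(φ) + E_{H₂}(φ) + 1 + (φ u - φ v)²`, the last two terms coming from the bridges `{s,t}`
and `{u,v}`. Rescaling affinely, the two inner energies are at least `(1 - φ u)² E₁` and
`(φ v)² E₂`, where `Eᵢ` are the minimal energies of `H₁`, `H₂`; minimising this quadratic in
`(φ u, φ v)` is the series law for conductances `E₁, 1, E₂` and gives
`E_G(s,t) ≥ 1 + E₁E₂/(E₁ + E₂ + E₁E₂)`. Gluing affinely rescaled unit potentials of `H₁` and `H₂`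
at the optimal values of `φ u`, `φ v` and taking infima shows equality. Finally `Eᵢ > 0`, since
along a walk of length `n` from `s` to `u`, `1 = |φ s - φ u| ≤ n √(2 E(φ))`.
-/

lemma series_conductance_le {E₁ E₂ : ℝ} (h₁ : 0 < E₁) (h₂ : 0 < E₂) (a b : ℝ) :
    E₁ * E₂ / (E₁ + E₂ + E₁ * E₂) ≤ (1 - a) ^ 2 * E₁ + (a - b) ^ 2 + b ^ 2 * E₂ := by
  rw [div_le_iff₀ (by positivity)]
  nlinarith [mul_nonneg h₂.le (sq_nonneg ((1 - a) * E₁ - (a - b))),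
    sq_nonneg ((1 - a) * E₁ - b * E₂), mul_nonneg h₁.le (sq_nonneg ((a - b) - b * E₂))]

lemma series_conductance_eq {E₁ E₂ : ℝ} (h₁ : 0 < E₁) (h₂ : 0 < E₂) :
    let D := E₁ + E₂ + E₁ * E₂
    E₁ * E₂ / D = (E₂ / D) ^ 2 * E₁ + (1 - E₂ / D - E₁ / D) ^ 2 + (E₁ / D) ^ 2 * E₂ := by
  intro D
  have hD : D ≠ 0 := by positivity
  field_simp
  ring

namespace SimpleGraph

section

variable {V : Type*} [Fintype V] (G : SimpleGraph V)

noncomputable def minEnergy (s t : V) : ℝ :=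
  sInf (energy G '' {φ : V → ℝ | φ s = 1 ∧ φ t = 0})

lemma effRes_eq_one_div_minEnergy (s t : V) : effRes G s t = 1 / G.minEnergy s t := rfl

lemma energy_nonneg (φ : V → ℝ) : 0 ≤ energy G φ := by
  unfold energy
  refine mul_nonneg (by norm_num) (Finset.sum_nonneg fun x _ => Finset.sum_nonneg fun y _ => ?_)
  split_ifs <;> positivity

lemma energy_const_add_mul (φ : V → ℝ) (c d : ℝ) :
    energy G (fun x => c + d * φ x) = d ^ 2 * energy G φ := by
  simp only [energy, Finset.mul_sum]
  refine Finset.sum_congr rfl fun x _ => Finset.sum_congr rfl fun y _ => ?_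
  split_ifs <;> ring

lemma energy_const_mul (φ : V → ℝ) (d : ℝ) :
    energy G (fun x => d * φ x) = d ^ 2 * energy G φ := by
  simpa using G.energy_const_add_mul φ 0 d

lemma sq_sub_le_two_mul_energy (φ : V → ℝ) {x y : V} (h : G.Adj x y) :
    (φ x - φ y) ^ 2 ≤ 2 * energy G φ := by
  classical
  let f : V → V → ℝ := fun a b => if G.Adj a b then (φ a - φ b) ^ 2 else 0
  have hf : ∀ a b, 0 ≤ f a b := fun a b => by dsimp only [f]; split_ifs <;> positivity
  have : f x y ≤ ∑ a, ∑ b, f a b :=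
    (Finset.single_le_sum (fun b _ => hf x b) (Finset.mem_univ y)).trans
      (Finset.single_le_sum (fun a _ => Finset.sum_nonneg fun b _ => hf a b) (Finset.mem_univ x))
  simp only [f, if_pos h] at this
  unfold energy
  convert this using 1
  ring

lemma abs_sub_le_length_mul_sqrt_energy (φ : V → ℝ) {a b : V} (p : G.Walk a b) :
    |φ a - φ b| ≤ p.length * √(2 * energy G φ) := by
  induction p with
  | nil => simp
  | @cons a b c h p ih =>
    have hab : |φ a - φ b| ≤ √(2 * energy G φ) :=
      Real.abs_le_sqrt (G.sq_sub_le_two_mul_energy φ h)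
    calc |φ a - φ c| ≤ |φ a - φ b| + |φ b - φ c| := abs_sub_le _ _ _
      _ ≤ (p.length + 1 : ℕ) * √(2 * energy G φ) := by push_cast; linarith

variable {G}

lemma minEnergy_le_energy {s t : V} {φ : V → ℝ} (hs : φ s = 1) (ht : φ t = 0) :
    G.minEnergy s t ≤ energy G φ :=
  csInf_le ⟨0, by rintro _ ⟨ψ, -, rfl⟩; exact G.energy_nonneg ψ⟩ ⟨φ, ⟨hs, ht⟩, rfl⟩

lemma le_minEnergy {s t : V} (hst : s ≠ t) {c : ℝ}
    (h : ∀ φ : V → ℝ, φ s = 1 → φ t = 0 → c ≤ energy G φ) : c ≤ G.minEnergy s t := by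
  classical
  refine le_csInf ⟨_, Pi.single s 1, ⟨by simp, by simp [hst.symm]⟩, rfl⟩ ?_
  rintro _ ⟨φ, ⟨hs, ht⟩, rfl⟩
  exact h φ hs ht

lemma le_mul_minEnergy_add {s t : V} (hst : s ≠ t) {y c k : ℝ} (hc : 0 ≤ c)
    (h : ∀ φ : V → ℝ, φ s = 1 → φ t = 0 → y ≤ c * energy G φ + k) :
    y ≤ c * G.minEnergy s t + k := by
  classical
  rcases hc.eq_or_lt with rfl | hc
  · simpa using h (Pi.single s 1) (by simp) (by simp [hst.symm])
  · have : (y - k) / c ≤ G.minEnergy s t :=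
      le_minEnergy hst fun φ hs ht => by rw [div_le_iff₀' hc]; linarith [h φ hs ht]
    rw [div_le_iff₀' hc] at this
    linarith

lemma sq_sub_mul_minEnergy_le_energy (s t : V) (φ : V → ℝ) :
    (φ s - φ t) ^ 2 * G.minEnergy s t ≤ energy G φ := by
  by_cases h : φ s = φ t
  · simpa [h] using G.energy_nonneg φ
  · have hd : φ s - φ t ≠ 0 := sub_ne_zero.mpr h
    set ψ : V → ℝ := fun x => (φ x - φ t) / (φ s - φ t)
    have hφ : φ = fun x => φ t + (φ s - φ t) * ψ x := by
      funext x; simp only [ψ]; field_simp; ring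
    have hψ : G.minEnergy s t ≤ energy G ψ :=
      minEnergy_le_energy (by simp [ψ, hd]) (by simp [ψ])
    calc (φ s - φ t) ^ 2 * G.minEnergy s t ≤ (φ s - φ t) ^ 2 * energy G ψ := by gcongr
      _ = energy G φ := by conv_rhs => rw [hφ, energy_const_add_mul]

lemma minEnergy_pos {s t : V} (hst : s ≠ t) (hr : G.Reachable s t) : 0 < G.minEnergy s t := by
  obtain ⟨p⟩ := hr
  have hn : (0 : ℝ) < p.length := by
    exact_mod_cast Nat.pos_of_ne_zero fun h => hst (p.eq_of_length_eq_zero h)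
  refine lt_of_lt_of_le (by positivity : (0 : ℝ) < 1 / (2 * p.length ^ 2)) (le_minEnergy hst ?_)
  intro φ hs ht
  have h1 : 1 ≤ p.length * √(2 * energy G φ) := by
    simpa [hs, ht] using G.abs_sub_le_length_mul_sqrt_energy φ p
  have h2 : 1 ≤ (p.length : ℝ) ^ 2 * (2 * energy G φ) := by
    calc (1 : ℝ) ≤ (p.length * √(2 * energy G φ)) ^ 2 := by nlinarith
      _ = _ := by rw [mul_pow, Real.sq_sqrt (by linarith [G.energy_nonneg φ])]
  rw [div_le_iff₀ (by positivity)]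
  linarith

end

section

variable {V₁ V₂ : Type*} [Fintype V₁] [Fintype V₂] (G : SimpleGraph (V₁ ⊕ V₂))

open Classical in
lemma energy_sum (φ : V₁ ⊕ V₂ → ℝ) :
    energy G φ = energy (G.comap Sum.inl) (φ ∘ Sum.inl) + energy (G.comap Sum.inr) (φ ∘ Sum.inr)
      + ∑ x, ∑ y, if G.Adj (.inl x) (.inr y) then (φ (.inl x) - φ (.inr y)) ^ 2 else 0 := by
  have hsymm : (∑ y : V₂, ∑ x : V₁,
        if G.Adj (.inr y) (.inl x) then (φ (.inr y) - φ (.inl x)) ^ 2 else 0) =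
      ∑ x, ∑ y, if G.Adj (.inl x) (.inr y) then (φ (.inl x) - φ (.inr y)) ^ 2 else 0 := by
    rw [Finset.sum_comm]
    refine Finset.sum_congr rfl fun x _ => Finset.sum_congr rfl fun y _ => ?_
    rw [G.adj_comm, sub_sq_comm]
  simp only [energy, Fintype.sum_sum_type, Finset.sum_add_distrib, comap_adj, Function.comp_apply,
    hsymm]
  ring

variable {G} {s u : V₁} {v t : V₂}

open Classical in
lemma sum_sum_ite_adj_of_adj_iff (hsu : s ≠ u)
    (hcross : ∀ x y, G.Adj (.inl x) (.inr y) ↔ (x = s ∧ y = t) ∨ (x = u ∧ y = v)) (f : V₁ → V₂ → ℝ) :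
    (∑ x, ∑ y, if G.Adj (.inl x) (.inr y) then f x y else 0) = f s t + f u v := by
  rw [← Fintype.sum_prod_type' (fun x y => if G.Adj (.inl x) (.inr y) then f x y else 0),
    ← Finset.sum_filter]
  have : Finset.univ.filter (fun q : V₁ × V₂ => G.Adj (.inl q.1) (.inr q.2)) = {(s, t), (u, v)} := by
    ext ⟨x, y⟩; simp [hcross]
  rw [this, Finset.sum_pair (by simp [hsu])]

lemma energy_eq_of_adj_iff (hsu : s ≠ u)
    (hcross : ∀ x y, G.Adj (.inl x) (.inr y) ↔ (x = s ∧ y = t) ∨ (x = u ∧ y = v))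
    (φ : V₁ ⊕ V₂ → ℝ) :
    energy G φ = energy (G.comap Sum.inl) (φ ∘ Sum.inl) + energy (G.comap Sum.inr) (φ ∘ Sum.inr)
      + (φ (.inl s) - φ (.inr t)) ^ 2 + (φ (.inl u) - φ (.inr v)) ^ 2 := by
  classical
  rw [energy_sum, sum_sum_ite_adj_of_adj_iff hsu hcross]
  ring

lemma minEnergy_inl_inr_le (hsu : s ≠ u) (hvt : v ≠ t)
    (hcross : ∀ x y, G.Adj (.inl x) (.inr y) ↔ (x = s ∧ y = t) ∨ (x = u ∧ y = v)) (a b : ℝ) :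
    G.minEnergy (.inl s) (.inr t) ≤ (1 - a) ^ 2 * (G.comap Sum.inl).minEnergy s u + (a - b) ^ 2
      + b ^ 2 * (G.comap Sum.inr).minEnergy v t + 1 := by
  set E₁ := (G.comap Sum.inl).minEnergy s u
  have key : ∀ ψ₂ : V₂ → ℝ, ψ₂ v = 1 → ψ₂ t = 0 → ∀ ψ₁ : V₁ → ℝ, ψ₁ s = 1 → ψ₁ u = 0 →
      G.minEnergy (.inl s) (.inr t) ≤ (1 - a) ^ 2 * energy (G.comap Sum.inl) ψ₁
        + ((a - b) ^ 2 + b ^ 2 * energy (G.comap Sum.inr) ψ₂ + 1) := by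
    intro ψ₂ hψ₂v hψ₂t ψ₁ hψ₁s hψ₁u
    let φ : V₁ ⊕ V₂ → ℝ := Sum.elim (fun x => a + (1 - a) * ψ₁ x) (fun y => b * ψ₂ y)
    have hφ₁ : φ ∘ Sum.inl = fun x => a + (1 - a) * ψ₁ x := rfl
    have hφ₂ : φ ∘ Sum.inr = fun y => b * ψ₂ y := rfl
    calc G.minEnergy (.inl s) (.inr t) ≤ energy G φ :=
          minEnergy_le_energy (by simp [φ, hψ₁s]) (by simp [φ, hψ₂t])
      _ = _ := by
          rw [energy_eq_of_adj_iff hsu hcross, hφ₁, hφ₂, energy_const_add_mul, energy_const_mul]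
          simp only [φ, Sum.elim_inl, Sum.elim_inr, hψ₁s, hψ₁u, hψ₂v, hψ₂t]
          ring
  have := le_mul_minEnergy_add hvt (sq_nonneg b) (k := (1 - a) ^ 2 * E₁ + (a - b) ^ 2 + 1)
    fun ψ₂ hψ₂v hψ₂t =>
      (le_mul_minEnergy_add hsu (sq_nonneg (1 - a)) (key ψ₂ hψ₂v hψ₂t)).trans_eq (by ring)
  linarith

lemma le_minEnergy_inl_inr (hsu : s ≠ u)
    (hcross : ∀ x y, G.Adj (.inl x) (.inr y) ↔ (x = s ∧ y = t) ∨ (x = u ∧ y = v))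
    (h₁ : 0 < (G.comap Sum.inl).minEnergy s u) (h₂ : 0 < (G.comap Sum.inr).minEnergy v t) :
    let E₁ := (G.comap Sum.inl).minEnergy s u
    let E₂ := (G.comap Sum.inr).minEnergy v t
    1 + E₁ * E₂ / (E₁ + E₂ + E₁ * E₂) ≤ G.minEnergy (.inl s) (.inr t) := by
  intro E₁ E₂
  refine le_minEnergy (by simp) fun φ hs ht => ?_
  have hH₁ := (G.comap Sum.inl).sq_sub_mul_minEnergy_le_energy s u (φ ∘ Sum.inl)
  have hH₂ := (G.comap Sum.inr).sq_sub_mul_minEnergy_le_energy v t (φ ∘ Sum.inr)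
  have := series_conductance_le h₁ h₂ (φ (.inl u)) (φ (.inr v))
  simp only [Function.comp_apply, hs, ht, sub_zero] at hH₁ hH₂
  rw [energy_eq_of_adj_iff hsu hcross, hs, ht]
  linarith

lemma minEnergy_inl_inr_eq (hsu : s ≠ u) (hvt : v ≠ t)
    (hcross : ∀ x y, G.Adj (.inl x) (.inr y) ↔ (x = s ∧ y = t) ∨ (x = u ∧ y = v))
    (h₁ : (G.comap Sum.inl).Reachable s u) (h₂ : (G.comap Sum.inr).Reachable v t) :
    let E₁ := (G.comap Sum.inl).minEnergy s u
    let E₂ := (G.comap Sum.inr).minEnergy v t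
    G.minEnergy (.inl s) (.inr t) = 1 + E₁ * E₂ / (E₁ + E₂ + E₁ * E₂) := by
  intro E₁ E₂
  have hE₁ : 0 < E₁ := minEnergy_pos hsu h₁
  have hE₂ : 0 < E₂ := minEnergy_pos hvt h₂
  set D := E₁ + E₂ + E₁ * E₂
  refine le_antisymm ?_ (le_minEnergy_inl_inr hsu hcross hE₁ hE₂)
  calc G.minEnergy (.inl s) (.inr t)
      ≤ (1 - (1 - E₂ / D)) ^ 2 * E₁ + (1 - E₂ / D - E₁ / D) ^ 2 + (E₁ / D) ^ 2 * E₂ + 1 :=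
        minEnergy_inl_inr_le hsu hvt hcross _ _
    _ = 1 + E₁ * E₂ / D := by rw [series_conductance_eq hE₁ hE₂]; ring

end

end SimpleGraph

/-- **Series–parallel decomposition.**
Let `H₁`, `H₂` be graphs on disjoint vertex sets (modelled by the sum type `V₁ ⊕ V₂`), with
`s ≠ u` in the same connected component of `H₁` and `v ≠ t` in the same connected component
of `H₂`.  Let `G` be the graph on `V₁ ⊕ V₂` whose edges are those of `H₁`, those of `H₂`,
together with `{s,t}` and `{u,v}`.  Then, writing `R₁ = R_{H₁}(s,u)` and `R₂ = R_{H₂}(v,t)`,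
the `s`–`t` effective resistance in `G` is `(1 + R₁ + R₂)/(2 + R₁ + R₂)`; in particular it
is `< 1`. -/
theorem effRes_series_parallel
    {V₁ V₂ : Type*} [Fintype V₁] [Fintype V₂]
    (H₁ : SimpleGraph V₁) (H₂ : SimpleGraph V₂)
    (s u : V₁) (hsu : s ≠ u) (hreach₁ : H₁.Reachable s u)
    (v t : V₂) (hvt : v ≠ t) (hreach₂ : H₂.Reachable v t)
    (G : SimpleGraph (V₁ ⊕ V₂))
    (hG : ∀ a b : V₁ ⊕ V₂, G.Adj a b ↔
      ((∃ x y : V₁, a = Sum.inl x ∧ b = Sum.inl y ∧ H₁.Adj x y) ∨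
       (∃ x y : V₂, a = Sum.inr x ∧ b = Sum.inr y ∧ H₂.Adj x y) ∨
       (a = Sum.inl s ∧ b = Sum.inr t) ∨ (a = Sum.inr t ∧ b = Sum.inl s) ∨
       (a = Sum.inl u ∧ b = Sum.inr v) ∨ (a = Sum.inr v ∧ b = Sum.inl u))) :
    effRes G (Sum.inl s) (Sum.inr t) =
        (1 + effRes H₁ s u + effRes H₂ v t) / (2 + effRes H₁ s u + effRes H₂ v t) ∧
      effRes G (Sum.inl s) (Sum.inr t) < 1 := by
  have hH₁ : G.comap Sum.inl = H₁ := by ext x y; simp [hG]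
  have hH₂ : G.comap Sum.inr = H₂ := by ext x y; simp [hG]
  have hcross : ∀ x y, G.Adj (.inl x) (.inr y) ↔ (x = s ∧ y = t) ∨ (x = u ∧ y = v) := by
    intro x y; simp [hG]
  subst hH₁ hH₂
  simp only [SimpleGraph.effRes_eq_one_div_minEnergy,
    SimpleGraph.minEnergy_inl_inr_eq hsu hvt hcross hreach₁ hreach₂]
  set E₁ := (G.comap Sum.inl).minEnergy s u
  set E₂ := (G.comap Sum.inr).minEnergy v t
  have hE₁ : 0 < E₁ := SimpleGraph.minEnergy_pos hsu hreach₁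
  have hE₂ : 0 < E₂ := SimpleGraph.minEnergy_pos hvt hreach₂
  have hseries : 0 < E₁ * E₂ / (E₁ + E₂ + E₁ * E₂) := by positivity
  refine ⟨by field_simp; ring, (div_lt_one (by positivity)).2 (by linarith)⟩
end
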